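/- arXiv:2501.18204 — 2 statements merged into one kernel-verified Lean document; each statement's English description precedes it below -/
import Mathlib

section
/- Let d ≥ 2 and let 𝒱(x) be the cell of a centered random tree after N steps. For any α ∈ (0,1/d), with β = (d−1)α/(1−α): ℙ(diam(𝒱(x)) ≥ √d · 2^{−αN}) ≤ d (1 − (1−β)/d)^N β^{−αN}. Moreover, for any α ∈ (1/d,1), with the same β = (d−1)α/(1−α): ℙ(diam(𝒱(x)) ≤ √d · 2^{−αN}) ≤ d (1 − (1−β)/d)^N β^{−αN}. -/
open MeasureTheory ProbabilityTheory Real Set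
open scoped ENNReal Classical

noncomputable section

abbrev Euc (d : ℕ) := EuclideanSpace ℝ (Fin d)

/-- Shattering coefficient `S_𝒜(n)` of a class of subsets of `ℝ^d`. -/
def shatterCoeff {d : ℕ} (𝒜 : Set (Set (Euc d))) (n : ℕ) : ℕ :=
  sSup {m : ℕ | ∃ z : Fin n → Euc d,
    m = Set.ncard {v : Fin n → Prop | ∃ A ∈ 𝒜, v = fun i => z i ∈ A}}

/-- VC dimension: the largest `n` with `S_𝒜(n) = 2^n`. -/
def vcDim {d : ℕ} (𝒜 : Set (Set (Euc d))) : ℕ :=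
  sSup {n : ℕ | 1 ≤ n ∧ shatterCoeff 𝒜 n = 2 ^ n}

/-- The local averaging estimator `ĝ_𝒱(x)` (with convention 0/0 = 0). -/
def locAvg {Ω : Type*} {d n : ℕ} (Xs : Fin n → Ω → Euc d) (Ys : Fin n → Ω → ℝ)
    (V : Set (Euc d)) (ω : Ω) : ℝ :=
  (∑ i, if Xs i ω ∈ V then Ys i ω else 0) / (∑ i, if Xs i ω ∈ V then (1:ℝ) else 0)

/-- `n ℙ_n(V)`: number of covariates falling in `V`. -/
def empCount {Ω : Type*} {d n : ℕ} (Xs : Fin n → Ω → Euc d) (V : Set (Euc d)) (ω : Ω) : ℝ :=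
  ∑ i, if Xs i ω ∈ V then (1:ℝ) else 0

/-- Local Lipschitz constant `L(V)` of `g` on `V`. -/
def locLip {d : ℕ} (g : Euc d → ℝ) (V : Set (Euc d)) : ℝ :=
  sInf {L : ℝ | 0 ≤ L ∧ ∀ x ∈ V, ∀ y ∈ V, |g x - g y| ≤ L * ‖x - y‖}

/-- Assumption (E): conditionally centered and sub-Gaussian noise. -/
def CondSubG {Ω : Type*} [MeasurableSpace Ω] {d : ℕ} (μ : Measure Ω)
    (X : Ω → Euc d) (Y : Ω → ℝ) (g : Euc d → ℝ) (σ : ℝ) : Prop :=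
  (μ[fun ω => Y ω - g (X ω) | MeasurableSpace.comap X inferInstance] =ᵐ[μ] 0)
  ∧ ∀ l : ℝ,
      (μ[fun ω => Real.exp (l * (Y ω - g (X ω))) | MeasurableSpace.comap X inferInstance])
        ≤ᵐ[μ] fun _ => Real.exp (l ^ 2 / (2 * σ ^ 2))

/-- The regression sample is i.i.d. -/
def IIDSample {Ω : Type*} [MeasurableSpace Ω] {d n : ℕ} (μ : Measure Ω)
    (Xs : Fin n → Ω → Euc d) (Ys : Fin n → Ω → ℝ) : Prop :=
  (∀ i, Measurable (Xs i)) ∧ (∀ i, Measurable (Ys i)) ∧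
  iIndepFun (fun i ω => (Xs i ω, Ys i ω)) μ ∧
  ∀ i j, IdentDistrib (fun ω => (Xs i ω, Ys i ω)) (fun ω => (Xs j ω, Ys j ω)) μ μ

/-- Closed hyper-rectangle with corners `a`, `b`. -/
def box {d : ℕ} (a b : Fin d → ℝ) : Set (Euc d) := {x | ∀ k, x k ∈ Set.Icc (a k) (b k)}

/-- Endpoints of the random tree cell containing `x` after `N` splits. -/
def treeEndpoints (d : ℕ) (x : Euc d) (D : ℕ → Fin d) (S : ℕ → ℝ) :
    ℕ → (Fin d → ℝ) × (Fin d → ℝ)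
  | 0 => (fun _ => 0, fun _ => 1)
  | N + 1 =>
    let p := treeEndpoints d x D S N
    let k := D N
    let c := p.1 k + (p.2 k - p.1 k) * S N
    if x k < c then (p.1, Function.update p.2 k c)
    else (Function.update p.1 k c, p.2)

/-- The cell of the random tree containing `x` after `N` splits. -/
def treeCell (d : ℕ) (x : Euc d) (D : ℕ → Fin d) (S : ℕ → ℝ) (N : ℕ) : Set (Euc d) :=
  box (treeEndpoints d x D S N).1 (treeEndpoints d x D S N).2

/-- Side length in direction `k` of the cell after `N` splits. -/
def cellSide (d : ℕ) (x : Euc d) (D : ℕ → Fin d) (S : ℕ → ℝ) (N : ℕ) (k : Fin d) : ℝ :=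
  (treeEndpoints d x D S N).2 k - (treeEndpoints d x D S N).1 k

/-- `S̄_i`: the length reduction at step `i`. -/
def treeSbar (d : ℕ) (x : Euc d) (D : ℕ → Fin d) (S : ℕ → ℝ) (i : ℕ) : ℝ :=
  let p := treeEndpoints d x D S i
  let k := D i
  let c := p.1 k + (p.2 k - p.1 k) * S i
  if x k < c then S i else 1 - S i

/-- Splits of a uniform random tree: i.i.d. pairs, `D_i` uniform on directions,
`S_i` uniform on `(0,1)`, all independent. -/
def UniformSplits {Ω : Type*} [MeasurableSpace Ω] (μ : Measure Ω) (d : ℕ)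
    (D : ℕ → Ω → Fin d) (S : ℕ → Ω → ℝ) : Prop :=
  (∀ i, Measurable (D i)) ∧ (∀ i, Measurable (S i)) ∧
  iIndepFun (fun i ω => (D i ω, S i ω)) μ ∧
  (∀ i k, μ {ω | D i ω = k} = (d : ℝ≥0∞)⁻¹) ∧
  (∀ i, Measure.map (S i) μ = volume.restrict (Set.Ioo (0:ℝ) 1)) ∧
  (∀ i, IndepFun (D i) (S i) μ)

/-- Splits of a centered random tree: `D_i` i.i.d. uniform on directions, `S_i = 1/2` a.s. -/
def CenteredSplits {Ω : Type*} [MeasurableSpace Ω] (μ : Measure Ω) (d : ℕ)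
    (D : ℕ → Ω → Fin d) (S : ℕ → Ω → ℝ) : Prop :=
  (∀ i, Measurable (D i)) ∧
  iIndepFun D μ ∧
  (∀ i k, μ {ω | D i ω = k} = (d : ℝ≥0∞)⁻¹) ∧
  (∀ i, ∀ᵐ ω ∂μ, S i ω = 1/2)

/-- The `k`-NN radius `τ̂_k(x)`. -/
def knnRadius {Ω : Type*} {d n : ℕ} (Xs : Fin n → Ω → Euc d) (k : ℕ) (ω : Ω) (x : Euc d) : ℝ :=
  sInf {τ : ℝ | 0 < τ ∧ (k : ℝ) ≤ ∑ i, if Xs i ω ∈ Metric.closedBall x τ then (1:ℝ) else 0}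

/-!
In a centered tree every split halves one side of the cell, so the side in direction `k` is
`2^(-K_k)`, where `K_k` counts the splits along `k` among the first `N`, and the diameter is the
Euclidean norm of the vector of sides. If the diameter is at least `√d 2^(-αN)`, some `K_k ≤ αN`;
if it is at most that, some `K_k ≥ αN`. In both cases `β^(αN) ≤ β^K_k` (as `β < 1`, resp.
`β > 1`), and Markov's inequality for `β^K_k`, whose mean is `(1 - (1 - β)/d)^N` because the
directions are independent and uniform, together with a union bound over `k` gives the bounds.
-/

def splitCount {d : ℕ} (D : ℕ → Fin d) (N : ℕ) (k : Fin d) : ℕ :=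
  ((Finset.range N).filter (fun i => D i = k)).card

lemma splitCount_succ {d : ℕ} (D : ℕ → Fin d) (N : ℕ) (k : Fin d) :
    splitCount D (N + 1) k = splitCount D N k + if D N = k then 1 else 0 := by
  simp only [splitCount, Finset.card_filter, Finset.sum_range_succ]

lemma diam_box {d : ℕ} (a b : Fin d → ℝ) (hab : ∀ k, a k ≤ b k) :
    Metric.diam (box a b) = √(∑ k, (b k - a k) ^ 2) := by
  have hdist : ∀ y ∈ box a b, ∀ z ∈ box a b, dist y z ≤ √(∑ k, (b k - a k) ^ 2) := by
    intro y hy z hz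
    rw [EuclideanSpace.dist_eq]
    gcongr with k
    have hyk := hy k
    have hzk := hz k
    rw [Set.mem_Icc] at hyk hzk
    exact abs_sub_le_iff.2 ⟨by linarith, by linarith⟩
  refine le_antisymm (Metric.diam_le_of_forall_dist_le (Real.sqrt_nonneg _) hdist) ?_
  have ha : WithLp.toLp 2 a ∈ box a b := fun k => ⟨le_rfl, hab k⟩
  have hb : WithLp.toLp 2 b ∈ box a b := fun k => ⟨hab k, le_rfl⟩
  calc √(∑ k, (b k - a k) ^ 2) = dist (WithLp.toLp 2 a) (WithLp.toLp 2 b) := by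
        simp only [EuclideanSpace.dist_eq, Real.dist_eq, sq_abs, ← neg_sub (b _), neg_sq]
    _ ≤ Metric.diam (box a b) :=
        Metric.dist_le_diam_of_mem (Metric.isBounded_iff.2 ⟨_, hdist⟩) ha hb

lemma exists_le_of_sqrt_card_mul_le {ι : Type*} [Fintype ι] [Nonempty ι] {a : ι → ℝ}
    (ha : ∀ i, 0 ≤ a i) {c : ℝ} (h : √(Fintype.card ι) * c ≤ √(∑ i, a i ^ 2)) :
    ∃ i, c ≤ a i := by
  by_contra! hlt
  obtain ⟨i⟩ := ‹Nonempty ι›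
  have hc : 0 < c := (ha i).trans_lt (hlt i)
  have hsum : ∑ i, a i ^ 2 < Fintype.card ι * c ^ 2 := by
    simpa using Finset.sum_lt_sum_of_nonempty Finset.univ_nonempty
      fun i _ => pow_lt_pow_left₀ (hlt i) (ha i) two_ne_zero
  have := Real.sqrt_lt_sqrt (by positivity) hsum
  rw [Real.sqrt_mul (Nat.cast_nonneg _), Real.sqrt_sq hc.le] at this
  linarith

lemma exists_le_of_sqrt_le_sqrt_card_mul {ι : Type*} [Fintype ι] [Nonempty ι] {a : ι → ℝ}
    {c : ℝ} (h : √(∑ i, a i ^ 2) ≤ √(Fintype.card ι) * c) :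
    ∃ i, a i ≤ c := by
  by_contra! hlt
  have hc : 0 ≤ c :=
    nonneg_of_mul_nonneg_right ((Real.sqrt_nonneg _).trans h) (by positivity)
  have hsum : Fintype.card ι * c ^ 2 < ∑ i, a i ^ 2 := by
    simpa using Finset.sum_lt_sum_of_nonempty Finset.univ_nonempty
      fun i _ => pow_lt_pow_left₀ (hlt i) hc two_ne_zero
  have := Real.sqrt_lt_sqrt (by positivity) hsum
  rw [Real.sqrt_mul (Nat.cast_nonneg _), Real.sqrt_sq hc] at this
  linarith

section Geometry

variable {d : ℕ} (x : Euc d) (D : ℕ → Fin d) (S : ℕ → ℝ)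

lemma cellSide_succ (N : ℕ) (k : Fin d) :
    cellSide d x D S (N + 1) k =
      (if D N = k then treeSbar d x D S N else 1) * cellSide d x D S N k := by
  simp only [cellSide, treeSbar, treeEndpoints]
  by_cases hk : D N = k
  · subst hk
    rw [if_pos rfl]
    split_ifs <;> simp only [Function.update_self] <;> ring
  · split_ifs <;> simp [Function.update_of_ne (Ne.symm hk)]

variable {S}

lemma treeSbar_of_forall_eq_half (hS : ∀ i, S i = 1 / 2) (i : ℕ) :
    treeSbar d x D S i = 1 / 2 := by
  simp only [treeSbar, hS i]
  split_ifs <;> norm_num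

lemma cellSide_of_forall_eq_half (hS : ∀ i, S i = 1 / 2) (N : ℕ) (k : Fin d) :
    cellSide d x D S N k = (1 / 2) ^ splitCount D N k := by
  induction N with
  | zero => simp [cellSide, treeEndpoints, splitCount]
  | succ N ih =>
    rw [cellSide_succ, ih, treeSbar_of_forall_eq_half x D hS, splitCount_succ]
    split_ifs <;> ring

lemma diam_treeCell_of_forall_eq_half (hS : ∀ i, S i = 1 / 2) (N : ℕ) :
    Metric.diam (treeCell d x D S N) = √(∑ k, ((2 : ℝ) ^ (-(splitCount D N k : ℝ))) ^ 2) := by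
  have hside := cellSide_of_forall_eq_half x D hS N
  have hab k : (treeEndpoints d x D S N).1 k ≤ (treeEndpoints d x D S N).2 k := by
    have := hside k
    rw [cellSide] at this
    linarith [pow_nonneg (by norm_num : (0 : ℝ) ≤ 1 / 2) (splitCount D N k)]
  rw [treeCell, diam_box _ _ hab]
  congr 2 with k
  rw [← cellSide, hside, Real.rpow_neg zero_le_two, Real.rpow_natCast, one_div, inv_pow]

lemma exists_splitCount_le_of_le_diam [NeZero d] (hS : ∀ i, S i = 1 / 2) {N : ℕ} {s : ℝ}
    (h : √d * 2 ^ (-s) ≤ Metric.diam (treeCell d x D S N)) :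
    ∃ k, (splitCount D N k : ℝ) ≤ s := by
  rw [diam_treeCell_of_forall_eq_half x D hS] at h
  obtain ⟨k, hk⟩ := exists_le_of_sqrt_card_mul_le
    (fun k => Real.rpow_nonneg zero_le_two _) (by rwa [Fintype.card_fin])
  exact ⟨k, by rwa [Real.rpow_le_rpow_left_iff one_lt_two, neg_le_neg_iff] at hk⟩

lemma exists_le_splitCount_of_diam_le [NeZero d] (hS : ∀ i, S i = 1 / 2) {N : ℕ} {s : ℝ}
    (h : Metric.diam (treeCell d x D S N) ≤ √d * 2 ^ (-s)) :
    ∃ k, s ≤ splitCount D N k := by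
  rw [diam_treeCell_of_forall_eq_half x D hS] at h
  obtain ⟨k, hk⟩ := exists_le_of_sqrt_le_sqrt_card_mul (by rwa [Fintype.card_fin])
  exact ⟨k, by rwa [Real.rpow_le_rpow_left_iff one_lt_two, neg_le_neg_iff] at hk⟩

end Geometry

section Chernoff

variable {Ω : Type*} [MeasurableSpace Ω] {μ : Measure Ω} {d : ℕ}

lemma lintegral_comp_of_uniform {X : Ω → Fin d} (hX : Measurable X)
    (hunif : ∀ k, μ {ω | X ω = k} = (d : ℝ≥0∞)⁻¹) (f : Fin d → ℝ≥0∞) :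
    ∫⁻ ω, f (X ω) ∂μ = (d : ℝ≥0∞)⁻¹ * ∑ k, f k := by
  rw [← lintegral_map (measurable_of_countable f) hX, lintegral_fintype, Finset.mul_sum]
  refine Finset.sum_congr rfl fun k _ => ?_
  rw [Measure.map_apply hX (measurableSet_singleton k), mul_comm, ← hunif k]
  rfl

lemma measurable_splitCount {D : ℕ → Ω → Fin d} (hm : ∀ i, Measurable (D i)) (N : ℕ)
    (k : Fin d) : Measurable fun ω => splitCount (fun i => D i ω) N k := by
  simp only [splitCount, Finset.card_filter]
  exact Finset.measurable_sum _ fun i _ =>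
    Measurable.ite (hm i (measurableSet_singleton k)) measurable_const measurable_const

lemma lintegral_pow_splitCount {D : ℕ → Ω → Fin d} (hm : ∀ i, Measurable (D i))
    (hind : iIndepFun D μ) (hunif : ∀ i k, μ {ω | D i ω = k} = (d : ℝ≥0∞)⁻¹)
    (N : ℕ) (k : Fin d) (b : ℝ≥0∞) :
    ∫⁻ ω, b ^ splitCount (fun i => D i ω) N k ∂μ = ((d : ℝ≥0∞)⁻¹ * (b + (d - 1))) ^ N := by
  set f : Fin d → ℝ≥0∞ := fun j => if j = k then b else 1
  have hprod ω : b ^ splitCount (fun i => D i ω) N k = ∏ i ∈ Finset.range N, f (D i ω) := by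
    rw [splitCount, ← Finset.prod_const, Finset.prod_filter]
  have hsum : ∑ j, f j = b + (d - 1) := by
    rw [Fintype.sum_eq_add_sum_compl k, Finset.sum_congr rfl fun j hj => if_neg (by simpa using hj)]
    simp [f, Finset.card_compl]
  simp_rw [hprod]
  rw [lintegral_prod_eq_prod_lintegral_of_indepFun _ (fun i ω => f (D i ω))
    (hind.comp (fun _ => f) fun _ => measurable_of_countable f)
    fun i => (measurable_of_countable f).comp (hm i)]
  simp only [lintegral_comp_of_uniform (hm _) (hunif _) f, hsum,
    Finset.prod_const, Finset.card_range]

lemma measure_rpow_le_rpow_splitCount_le {D : ℕ → Ω → Fin d} (hm : ∀ i, Measurable (D i))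
    (hind : iIndepFun D μ) (hunif : ∀ i k, μ {ω | D i ω = k} = (d : ℝ≥0∞)⁻¹)
    (N : ℕ) (k : Fin d) {β : ℝ} (hβ : 0 < β) (t : ℝ) :
    μ {ω | β ^ t ≤ β ^ (splitCount (fun i => D i ω) N k : ℝ)} ≤
      ENNReal.ofReal ((1 - (1 - β) / d) ^ N * β ^ (-t)) := by
  have hd : (1 : ℝ) ≤ d := by exact_mod_cast k.pos
  have hβt : 0 < β ^ t := Real.rpow_pos_of_pos hβ t
  have hmean_nonneg : 0 ≤ 1 - (1 - β) / d := by
    rw [sub_nonneg, div_le_one (by linarith)]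
    linarith
  have hmean : (d : ℝ≥0∞)⁻¹ * (ENNReal.ofReal β + (d - 1)) =
      ENNReal.ofReal (1 - (1 - β) / d) := by
    rw [show 1 - (1 - β) / d = (d : ℝ)⁻¹ * (β + (d - 1)) by field_simp; ring,
      ENNReal.ofReal_mul (by positivity), ENNReal.ofReal_add hβ.le (by linarith),
      ENNReal.ofReal_inv_of_pos (by linarith), ENNReal.ofReal_sub _ zero_le_one]
    simp
  have hset : {ω | β ^ t ≤ β ^ (splitCount (fun i => D i ω) N k : ℝ)} =
      {ω | ENNReal.ofReal (β ^ t) ≤ ENNReal.ofReal β ^ splitCount (fun i => D i ω) N k} := by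
    ext ω
    rw [Set.mem_ofPred_eq, Set.mem_ofPred_eq, ← ENNReal.ofReal_pow hβ.le,
      ENNReal.ofReal_le_ofReal_iff (by positivity), Real.rpow_natCast]
  calc μ {ω | β ^ t ≤ β ^ (splitCount (fun i => D i ω) N k : ℝ)}
      ≤ (∫⁻ ω, ENNReal.ofReal β ^ splitCount (fun i => D i ω) N k ∂μ) /
          ENNReal.ofReal (β ^ t) := by
        rw [hset]
        exact meas_ge_le_lintegral_div
          ((measurable_of_countable _).comp (measurable_splitCount hm N k)).aemeasurable
          (ENNReal.ofReal_pos.2 hβt).ne' ENNReal.ofReal_ne_top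
    _ = ENNReal.ofReal ((1 - (1 - β) / d) ^ N * β ^ (-t)) := by
        rw [lintegral_pow_splitCount hm hind hunif, hmean, ← ENNReal.ofReal_pow hmean_nonneg,
          Real.rpow_neg hβ.le, ENNReal.ofReal_mul (by positivity),
          ENNReal.ofReal_inv_of_pos hβt, div_eq_mul_inv]

lemma measure_exists_rpow_le_rpow_splitCount_le {D : ℕ → Ω → Fin d}
    (hm : ∀ i, Measurable (D i)) (hind : iIndepFun D μ)
    (hunif : ∀ i k, μ {ω | D i ω = k} = (d : ℝ≥0∞)⁻¹) (N : ℕ) {β : ℝ} (hβ : 0 < β) (t : ℝ) :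
    μ {ω | ∃ k, β ^ t ≤ β ^ (splitCount (fun i => D i ω) N k : ℝ)} ≤
      ENNReal.ofReal (d * (1 - (1 - β) / d) ^ N * β ^ (-t)) := by
  rw [Set.ofPred_exists, mul_assoc, ENNReal.ofReal_mul (Nat.cast_nonneg d), ENNReal.ofReal_natCast]
  calc μ (⋃ k, {ω | β ^ t ≤ β ^ (splitCount (fun i => D i ω) N k : ℝ)})
      ≤ ∑ k, μ {ω | β ^ t ≤ β ^ (splitCount (fun i => D i ω) N k : ℝ)} :=
        measure_iUnion_fintype_le μ _
    _ ≤ ∑ _k : Fin d, ENNReal.ofReal ((1 - (1 - β) / d) ^ N * β ^ (-t)) :=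
        Finset.sum_le_sum fun k _ => measure_rpow_le_rpow_splitCount_le hm hind hunif N k hβ t
    _ = d * ENNReal.ofReal ((1 - (1 - β) / d) ^ N * β ^ (-t)) := by simp

end Chernoff

theorem statement15_general {d N : ℕ} (hd : 2 ≤ d)
    {Ω : Type*} [MeasurableSpace Ω] {μ : Measure Ω}
    (x : Euc d)
    (D : ℕ → Ω → Fin d) (S : ℕ → Ω → ℝ)
    (hsplit : CenteredSplits μ d D S) :
    (∀ α : ℝ, α ∈ Set.Ioo (0 : ℝ) (1 / (d : ℝ)) →
      μ {ω | Real.sqrt d * (2 : ℝ) ^ (-(α * N)) ≤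
          Metric.diam (treeCell d x (fun i => D i ω) (fun i => S i ω) N)} ≤
        ENNReal.ofReal ((d : ℝ) * (1 - (1 - ((d : ℝ) - 1) * α / (1 - α)) / d) ^ N *
          (((d : ℝ) - 1) * α / (1 - α)) ^ (-(α * N))))
    ∧ (∀ α : ℝ, α ∈ Set.Ioo (1 / (d : ℝ)) 1 →
      μ {ω | Metric.diam (treeCell d x (fun i => D i ω) (fun i => S i ω) N) ≤
          Real.sqrt d * (2 : ℝ) ^ (-(α * N))} ≤
        ENNReal.ofReal ((d : ℝ) * (1 - (1 - ((d : ℝ) - 1) * α / (1 - α)) / d) ^ N *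
          (((d : ℝ) - 1) * α / (1 - α)) ^ (-(α * N)))) := by
  obtain ⟨hm, hind, hunif, hS⟩ := hsplit
  have hhalf : ∀ᵐ ω ∂μ, ∀ i, S i ω = 1 / 2 := ae_all_iff.2 hS
  have : NeZero d := ⟨by omega⟩
  have hd1 : (1 : ℝ) < d := by exact_mod_cast hd
  have hβ {α : ℝ} (hα0 : 0 < α) (hα1 : α < 1) : 0 < ((d : ℝ) - 1) * α / (1 - α) :=
    div_pos (mul_pos (by linarith) hα0) (by linarith)
  refine ⟨fun α ⟨hα0, hαd⟩ => ?_, fun α ⟨hαd, hα1⟩ => ?_⟩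
  · have hαd' : α * d < 1 := (lt_div_iff₀ (by linarith)).1 hαd
    have hα1 : α < 1 := by nlinarith
    have hβ1 : ((d : ℝ) - 1) * α / (1 - α) ≤ 1 := by
      rw [div_le_one (by linarith)]
      linarith
    refine (measure_mono_ae ?_).trans
      (measure_exists_rpow_le_rpow_splitCount_le hm hind hunif N (hβ hα0 hα1) _)
    filter_upwards [hhalf] with ω hω hdiam
    obtain ⟨k, hk⟩ := exists_splitCount_le_of_le_diam x _ hω hdiam
    exact ⟨k, Real.rpow_le_rpow_of_exponent_ge (hβ hα0 hα1) hβ1 hk⟩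
  · have hαd' : 1 < α * d := (div_lt_iff₀ (by linarith)).1 hαd
    have hα0 : 0 < α := by nlinarith
    have hβ1 : 1 ≤ ((d : ℝ) - 1) * α / (1 - α) := by
      rw [le_div_iff₀ (by linarith)]
      linarith
    refine (measure_mono_ae ?_).trans
      (measure_exists_rpow_le_rpow_splitCount_le hm hind hunif N (hβ hα0 hα1) _)
    filter_upwards [hhalf] with ω hω hdiam
    obtain ⟨k, hk⟩ := exists_le_splitCount_of_diam_le x _ hω hdiam
    exact ⟨k, Real.rpow_le_rpow_of_exponent_le hβ1 hk⟩

/-- deviation bounds for the diameter of centered random tree cells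
(Proposition `prop:diam_CRT`). -/
theorem statement15 {d N : ℕ} (hd : 2 ≤ d)
    {Ω : Type*} [MeasurableSpace Ω] {μ : Measure Ω} [IsProbabilityMeasure μ]
    (x : Euc d) (hx : ∀ j, x j ∈ Set.Icc (0:ℝ) 1)
    (D : ℕ → Ω → Fin d) (S : ℕ → Ω → ℝ)
    (hsplit : CenteredSplits μ d D S) :
    (∀ α : ℝ, α ∈ Set.Ioo (0 : ℝ) (1 / (d : ℝ)) →
      μ {ω | Real.sqrt d * (2 : ℝ) ^ (-(α * N)) ≤
          Metric.diam (treeCell d x (fun i => D i ω) (fun i => S i ω) N)} ≤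
        ENNReal.ofReal ((d : ℝ) * (1 - (1 - ((d : ℝ) - 1) * α / (1 - α)) / d) ^ N *
          (((d : ℝ) - 1) * α / (1 - α)) ^ (-(α * N))))
    ∧ (∀ α : ℝ, α ∈ Set.Ioo (1 / (d : ℝ)) 1 →
      μ {ω | Metric.diam (treeCell d x (fun i => D i ω) (fun i => S i ω) N) ≤
          Real.sqrt d * (2 : ℝ) ^ (-(α * N))} ≤
        ENNReal.ofReal ((d : ℝ) * (1 - (1 - ((d : ℝ) - 1) * α / (1 - α)) / d) ^ N *
          (((d : ℝ) - 1) * α / (1 - α)) ^ (-(α * N)))) :=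
  statement15_general hd x D S hsplit

end
end

section
/- Shape regularity of Mondrian-type cells via Gamma side lengths: let λ > 0, let X_1,…,X_d be i.i.d. random variables with Gamma(2,λ) distribution (density t ↦ λ² t e^{−λt} on (0,∞)), and set h_− = min(X_1,…,X_d), h_+ = max(X_1,…,X_d). Then for every δ with 0 < δ ≤ 1 − (1 − e^{−1})^d, with probability at least 1−2δ: h_+/h_− ≤ 5d log(δ/d)/log(1−δ). -/
open MeasureTheory ProbabilityTheory Real Set
open scoped ENNReal Classical

noncomputable section

/-!
A Gamma(2, λ) variable has tail `ℙ(X ≥ w) = e^{-λw}(1 + λw)`. Put `a = -log(1 - δ)/d ≤ 1`,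
`s = √(1 - e^{-a})` and `r = log(d/δ) ≥ 1`. Since `e^{-s}(1 + s) ≥ 1 - s² = e^{-a}`, independence
gives `ℙ(h₋ ≥ s/λ) ≥ e^{-ad} = 1 - δ`; since `e^{-3r}(1 + 3r) ≤ e^{-r} = δ/d`, a union bound gives
`ℙ(h₊ > 3r/λ) ≤ δ`. Outside both events `h₊/h₋ ≤ 3r/s ≤ 5r/a`, the last step because
`1 - e^{-a} ≥ a - a²/2 ≥ a²/2` on `[0, 1]`.
-/

open Filter Topology

namespace Real

lemma exp_neg_le_one_sub_add_sq_div_two {a : ℝ} (ha : 0 ≤ a) : exp (-a) ≤ 1 - a + a ^ 2 / 2 := by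
  have h := quadratic_le_exp_of_nonneg ha
  rw [exp_neg, inv_eq_one_div, div_le_iff₀ (exp_pos a)]
  nlinarith [sq_nonneg a, sq_nonneg (a - 1),
    mul_le_mul_of_nonneg_left h (show (0:ℝ) ≤ 1 - a + a ^ 2 / 2 by nlinarith [sq_nonneg (a - 1)])]

lemma three_mul_le_five_mul_sqrt_one_sub_exp_neg {a : ℝ} (ha0 : 0 ≤ a) (ha1 : a ≤ 1) :
    3 * a ≤ 5 * √(1 - exp (-a)) := by
  have h := exp_neg_le_one_sub_add_sq_div_two ha0
  have hsq : (3 * a / 5) ^ 2 ≤ 1 - exp (-a) := by nlinarith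
  linarith [le_sqrt_of_sq_le hsq]

lemma exp_neg_natCast_le_one_sub {d : ℕ} {δ : ℝ} (hδ : δ ≤ 1 - (1 - exp (-1)) ^ d) :
    exp (-d) ≤ 1 - δ := by
  have h : exp (-1) ≤ 1 - exp (-1) := by linarith [exp_neg_one_lt_half]
  calc exp (-d) = exp (-1) ^ d := by rw [← exp_nat_mul]; ring_nf
    _ ≤ (1 - exp (-1)) ^ d := pow_le_pow_left₀ (exp_pos _).le h d
    _ ≤ 1 - δ := by linarith

lemma mul_exp_one_le_natCast {d : ℕ} {δ : ℝ} (hδ : δ ≤ 1 - (1 - exp (-1)) ^ d) :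
    δ * exp 1 ≤ d := by
  have bernoulli : 1 + d * -exp (-1) ≤ (1 + -exp (-1)) ^ d :=
    one_add_mul_le_pow (by linarith [exp_neg_one_lt_half, exp_pos (-1)]) d
  have h : δ ≤ d * exp (-1) := by rw [← sub_eq_add_neg] at bernoulli; linarith
  calc δ * exp 1 ≤ d * exp (-1) * exp 1 := by gcongr
    _ = d := by rw [mul_assoc, ← exp_add]; simp

end Real

open Real

lemma hasDerivAt_neg_exp_neg_mul_mul_one_add (lam y : ℝ) :
    HasDerivAt (fun x => -(exp (-(lam * x)) * (1 + lam * x)))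
      (lam ^ 2 * y * exp (-(lam * y))) y := by
  have hlin : HasDerivAt (fun x => lam * x) lam y := by
    simpa using (hasDerivAt_id y).const_mul lam
  have h := (hlin.fun_neg.exp.fun_mul (hlin.const_add 1)).fun_neg
  exact h.congr_deriv (by ring)

lemma tendsto_exp_neg_mul_mul_one_add_atTop {lam : ℝ} (hlam : 0 < lam) :
    Tendsto (fun x => exp (-(lam * x)) * (1 + lam * x)) atTop (𝓝 0) := by
  have h : Tendsto (fun z : ℝ => exp (-z) * (1 + z)) atTop (𝓝 0) := by
    have := tendsto_exp_neg_atTop_nhds_zero.add (tendsto_pow_mul_exp_neg_atTop_nhds_zero 1)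
    rw [add_zero] at this
    exact this.congr fun z => by ring
  exact h.comp (tendsto_id.const_mul_atTop hlam)

lemma gammaMeasure_two_Ici {lam : ℝ} (hlam : 0 < lam) {w : ℝ} (hw : 0 ≤ w) :
    gammaMeasure 2 lam (Ici w) = ENNReal.ofReal (exp (-(lam * w)) * (1 + lam * w)) := by
  have hderiv : ∀ x ∈ Ici w, HasDerivAt (fun x => -(exp (-(lam * x)) * (1 + lam * x)))
      (lam ^ 2 * x * exp (-(lam * x))) x :=
    fun x _ => hasDerivAt_neg_exp_neg_mul_mul_one_add lam x
  have hnonneg : ∀ x ∈ Ioi w, 0 ≤ lam ^ 2 * x * exp (-(lam * x)) := fun x hx => by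
    have : 0 ≤ x := hw.trans hx.le
    positivity
  have hlim : Tendsto (fun x => -(exp (-(lam * x)) * (1 + lam * x))) atTop (𝓝 0) := by
    simpa using (tendsto_exp_neg_mul_mul_one_add_atTop hlam).neg
  have hpdf : ∀ x ∈ Ioi w,
      gammaPDF 2 lam x = ENNReal.ofReal (lam ^ 2 * x * exp (-(lam * x))) := fun x hx => by
    rw [gammaPDF_of_nonneg (hw.trans hx.le), Gamma_two, show (2:ℝ) - 1 = 1 by norm_num,
      rpow_one, rpow_two]
    norm_num
  calc gammaMeasure 2 lam (Ici w) = ∫⁻ x in Ioi w, gammaPDF 2 lam x := by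
        rw [gammaMeasure, withDensity_apply _ measurableSet_Ici, setLIntegral_congr Ioi_ae_eq_Ici]
    _ = ENNReal.ofReal (∫ x in Ioi w, lam ^ 2 * x * exp (-(lam * x))) := by
        rw [setLIntegral_congr_fun measurableSet_Ioi hpdf,
          ofReal_integral_eq_lintegral_ofReal (integrableOn_Ioi_deriv_of_nonneg' hderiv hnonneg hlim)
            ((ae_restrict_iff' measurableSet_Ioi).2 (ae_of_all _ hnonneg))]
    _ = ENNReal.ofReal (exp (-(lam * w)) * (1 + lam * w)) := by
        rw [integral_Ioi_of_hasDerivAt_of_nonneg' hderiv hnonneg hlim]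
        norm_num

lemma one_sub_sq_le_gammaMeasure_two_Ici {lam : ℝ} (hlam : 0 < lam) {s : ℝ} (hs : 0 ≤ s) :
    ENNReal.ofReal (1 - s ^ 2) ≤ gammaMeasure 2 lam (Ici (s / lam)) := by
  rw [gammaMeasure_two_Ici hlam (by positivity), mul_div_cancel₀ _ hlam.ne']
  exact ENNReal.ofReal_le_ofReal (by nlinarith [one_sub_le_exp_neg s])

lemma gammaMeasure_two_Ici_le_exp_neg {lam : ℝ} (hlam : 0 < lam) {r : ℝ} (hr : 1 / 2 ≤ r) :
    gammaMeasure 2 lam (Ici (3 * r / lam)) ≤ ENNReal.ofReal (exp (-r)) := by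
  rw [gammaMeasure_two_Ici hlam (by positivity), mul_div_cancel₀ _ hlam.ne']
  have h : 1 + 3 * r ≤ exp (2 * r) := by
    nlinarith [quadratic_le_exp_of_nonneg (show 0 ≤ 2 * r by linarith)]
  refine ENNReal.ofReal_le_ofReal ?_
  calc exp (-(3 * r)) * (1 + 3 * r) ≤ exp (-(3 * r)) * exp (2 * r) := by gcongr
    _ = exp (-r) := by rw [← exp_add]; ring_nf

lemma ofReal_pow_sub_mul_le_measure_iSup_div_iInf_le {ι Ω : Type*} [Fintype ι] [Nonempty ι]
    [MeasurableSpace Ω] {μ : Measure Ω} {X : ι → Ω → ℝ} (hind : iIndepFun X μ)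
    {u v p q : ℝ} (hu : 0 < u) (hp : 0 ≤ p) (hq : 0 ≤ q)
    (hlow : ∀ i, ENNReal.ofReal p ≤ μ (X i ⁻¹' Ici u))
    (hup : ∀ i, μ (X i ⁻¹' Ioi v) ≤ ENNReal.ofReal q) :
    ENNReal.ofReal (p ^ Fintype.card ι - Fintype.card ι * q) ≤
      μ {ω | (⨆ i, X i ω) / (⨅ i, X i ω) ≤ v / u} := by
  set A := ⋂ i, X i ⁻¹' Ici u
  set B := ⋃ i, X i ⁻¹' Ioi v
  have hA : ENNReal.ofReal (p ^ Fintype.card ι) ≤ μ A := by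
    rw [hind.meas_iInter fun i => ⟨Ici u, measurableSet_Ici, rfl⟩, ENNReal.ofReal_pow hp,
      ← Finset.card_univ, ← Finset.prod_const]
    exact Finset.prod_le_prod' fun i _ => hlow i
  have hB : μ B ≤ ENNReal.ofReal (Fintype.card ι * q) :=
    calc μ B ≤ ∑ i, μ (X i ⁻¹' Ioi v) := measure_iUnion_fintype_le _ _
      _ ≤ ∑ _i : ι, ENNReal.ofReal q := Finset.sum_le_sum fun i _ => hup i
      _ = ENNReal.ofReal (Fintype.card ι * q) := by
        rw [Finset.sum_const, Finset.card_univ, nsmul_eq_mul, ENNReal.ofReal_mul (by positivity),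
          ENNReal.ofReal_natCast]
  have hsub : A \ B ⊆ {ω | (⨆ i, X i ω) / (⨅ i, X i ω) ≤ v / u} := by
    rintro ω ⟨hωA, hωB⟩
    simp only [A, B, mem_iInter, mem_iUnion, mem_preimage, mem_Ici, mem_Ioi, not_exists,
      not_lt] at hωA hωB
    inhabit ι
    exact div_le_div₀ (hu.le.trans ((hωA default).trans (hωB default))) (ciSup_le hωB) hu
      (le_ciInf hωA)
  calc ENNReal.ofReal (p ^ Fintype.card ι - Fintype.card ι * q)
      = ENNReal.ofReal (p ^ Fintype.card ι) - ENNReal.ofReal (Fintype.card ι * q) :=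
        ENNReal.ofReal_sub _ (by positivity)
    _ ≤ μ A - μ B := tsub_le_tsub hA hB
    _ ≤ μ (A \ B) := le_measure_sdiff
    _ ≤ _ := measure_mono hsub

lemma ofReal_le_measure_iSup_div_iInf_le_of_gammaMeasure_two {ι Ω : Type*} [Fintype ι]
    [Nonempty ι] [MeasurableSpace Ω] {μ : Measure Ω} {X : ι → Ω → ℝ}
    (hmeas : ∀ i, Measurable (X i)) (hind : iIndepFun X μ) {lam : ℝ} (hlam : 0 < lam)
    (hgamma : ∀ i, Measure.map (X i) μ = gammaMeasure 2 lam) {a r : ℝ} (ha : 0 < a)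
    (hr : 1 / 2 ≤ r) :
    ENNReal.ofReal (exp (-a) ^ Fintype.card ι - Fintype.card ι * exp (-r)) ≤
      μ {ω | (⨆ i, X i ω) / (⨅ i, X i ω) ≤ 3 * r / √(1 - exp (-a))} := by
  have hexp : exp (-a) < 1 := exp_lt_one_iff.2 (neg_lt_zero.2 ha)
  have hs : 1 - √(1 - exp (-a)) ^ 2 = exp (-a) := by rw [sq_sqrt (by linarith)]; ring
  have hs_pos : 0 < √(1 - exp (-a)) := sqrt_pos.2 (by linarith)
  rw [← div_div_div_cancel_right₀ hlam.ne']
  refine ofReal_pow_sub_mul_le_measure_iSup_div_iInf_le hind (div_pos hs_pos hlam)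
    (exp_pos _).le (exp_pos _).le (fun i => ?_) (fun i => ?_)
  · rw [← Measure.map_apply (hmeas i) measurableSet_Ici, hgamma i]
    simpa only [hs] using one_sub_sq_le_gammaMeasure_two_Ici hlam hs_pos.le
  · rw [← Measure.map_apply (hmeas i) measurableSet_Ioi, hgamma i]
    exact (measure_mono Ioi_subset_Ici_self).trans (gammaMeasure_two_Ici_le_exp_neg hlam hr)

theorem statement19_general {d : ℕ} (hd : 1 ≤ d) {lam : ℝ} (hlam : 0 < lam)
    {Ω : Type*} [MeasurableSpace Ω] {μ : Measure Ω}
    (Xv : Fin d → Ω → ℝ) (hmeas : ∀ i, Measurable (Xv i))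
    (hindep : iIndepFun Xv μ)
    (hgamma : ∀ i, Measure.map (Xv i) μ = gammaMeasure 2 lam)
    {δ : ℝ} (hδ0 : 0 < δ) (hδ1 : δ ≤ 1 - (1 - Real.exp (-1)) ^ d) :
    ENNReal.ofReal (1 - 2 * δ) ≤
      μ {ω | (⨆ i, Xv i ω) / (⨅ i, Xv i ω) ≤
        5 * d * Real.log (δ / d) / Real.log (1 - δ)} := by
  have : Nonempty (Fin d) := ⟨⟨0, hd⟩⟩
  have hdR : (0:ℝ) < d := by exact_mod_cast hd
  have hδexp := exp_neg_natCast_le_one_sub hδ1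
  have h1δ : 0 < 1 - δ := (exp_pos _).trans_le hδexp
  have hlog : log (1 - δ) < 0 := log_neg h1δ (by linarith)
  set a := -log (1 - δ) / d
  set r := log (d / δ)
  have ha0 : 0 < a := div_pos (neg_pos.2 hlog) hdR
  have ha1 : a ≤ 1 := by
    rw [div_le_one hdR, neg_le]; exact (le_log_iff_exp_le h1δ).2 hδexp
  have hr : 1 ≤ r := by
    rw [le_log_iff_exp_le (by positivity), le_div_iff₀ hδ0]; linarith [mul_exp_one_le_natCast hδ1]
  have hpow : exp (-a) ^ d = 1 - δ := by
    rw [← exp_nat_mul, show (d:ℝ) * -a = log (1 - δ) by simp only [a]; field_simp, exp_log h1δ]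
  have hd_exp : d * exp (-r) = δ := by rw [exp_neg, exp_log (by positivity), inv_div]; field_simp
  have hratio : 3 * r / √(1 - exp (-a)) ≤ 5 * d * log (δ / d) / log (1 - δ) := by
    rw [show 5 * d * log (δ / d) / log (1 - δ) = 5 * r / a by
        rw [← inv_div (d : ℝ) δ, log_inv]; simp only [a, r]; field_simp [hlog.ne],
      div_le_div_iff₀ (sqrt_pos.2 (by linarith [exp_lt_one_iff.2 (neg_lt_zero.2 ha0)])) ha0]
    nlinarith [three_mul_le_five_mul_sqrt_one_sub_exp_neg ha0.le ha1]
  have hbound := ofReal_le_measure_iSup_div_iInf_le_of_gammaMeasure_two hmeas hindep hlam hgamma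
    ha0 (by linarith : 1 / 2 ≤ r)
  rw [Fintype.card_fin, hpow, hd_exp] at hbound
  calc ENNReal.ofReal (1 - 2 * δ) = ENNReal.ofReal (1 - δ - δ) := by ring_nf
    _ ≤ _ := hbound.trans (measure_mono fun ω hω => le_trans hω hratio)

/-- shape regularity of Mondrian-type cells via Gamma side lengths
(Proposition `mondrian`). -/
theorem statement19 {d : ℕ} (hd : 1 ≤ d) {lam : ℝ} (hlam : 0 < lam)
    {Ω : Type*} [MeasurableSpace Ω] {μ : Measure Ω} [IsProbabilityMeasure μ]
    (Xv : Fin d → Ω → ℝ) (hmeas : ∀ i, Measurable (Xv i))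
    (hindep : iIndepFun Xv μ)
    (hgamma : ∀ i, Measure.map (Xv i) μ = gammaMeasure 2 lam)
    {δ : ℝ} (hδ0 : 0 < δ) (hδ1 : δ ≤ 1 - (1 - Real.exp (-1)) ^ d) :
    ENNReal.ofReal (1 - 2 * δ) ≤
      μ {ω | (⨆ i, Xv i ω) / (⨅ i, Xv i ω) ≤
        5 * d * Real.log (δ / d) / Real.log (1 - δ)} :=
  statement19_general hd hlam Xv hmeas hindep hgamma hδ0 hδ1
end
end
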